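/- Let $S = K[X_1,\ldots,X_n]$ over a perfect field $K$ of characteristic $p > 0$, let $w \in (\mathbb{N}_{>0})^n$ be a weight vector, and let $g \in S$. Then either $\mathrm{Tr}(\mathrm{in}_w(g)) = 0$ or $\mathrm{Tr}(\mathrm{in}_w(g)) = \mathrm{in}_w(\mathrm{Tr}(g))$. -/

import Mathlib

/-!
The coefficient of `X^v` in `Tr g` is the `p`-th root of the coefficient of `X^(p(v+1)-1)` in `g`,
and the `w`-degree of `p(v+1)-1` is `p · deg_w v + (p-1) · ∑ w`, a strictly increasing function of
`deg_w v`. So if some top-degree monomial of `g` has the form `X^(p(v₀+1)-1)`, then `X^v₀` is a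
top-degree monomial of `Tr g` and the top-degree parts correspond under `Tr`; otherwise `Tr` kills
every term of `in_w g`.
-/

open MvPolynomial
open scoped Classical

/-- The trace map `Tr : F_*S → S`, the projection onto the basis element
`X_1^{p-1} ⋯ X_n^{p-1}` of the monomial basis of `F_*S` over `S`. -/
noncomputable def Tr (n p : ℕ) [Fact p.Prime] (K : Type) [Field K] [CharP K p]
    [PerfectRing K p] (g : MvPolynomial (Fin n) K) : MvPolynomial (Fin n) K :=
  ∑ u ∈ g.support,
    if (∀ j, u j % p = p - 1) then
      monomial
        (u.mapRange (fun a => (a + 1) / p - 1)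
          (by simp [Nat.div_eq_of_lt (Fact.out : p.Prime).one_lt]))
        ((frobeniusEquiv K p).symm (coeff u g))
    else 0

/-- The `w`-degree of a polynomial: the maximum of `∑ j, w j * u j` over the exponent
vectors `u` in its support. -/
def wdeg (n : ℕ) (K : Type) [Field K] (w : Fin n → ℕ)
    (g : MvPolynomial (Fin n) K) : ℕ :=
  g.support.sup fun u => ∑ j, w j * u j

/-- The initial form `in_w(g)`: the sum of the terms of `g` of maximal `w`-degree. -/
noncomputable def inw (n : ℕ) (K : Type) [Field K] (w : Fin n → ℕ)
    (g : MvPolynomial (Fin n) K) : MvPolynomial (Fin n) K :=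
  ∑ u ∈ g.support,
    if (∑ j, w j * u j) = wdeg n K w g then monomial u (coeff u g) else 0

namespace Nat

variable {p : ℕ}

theorem mul_succ_sub_one_mod (hp : 0 < p) (b : ℕ) : (p * (b + 1) - 1) % p = p - 1 := by
  obtain ⟨q, rfl⟩ : ∃ q, p = q + 1 := ⟨p - 1, by omega⟩
  rw [show (q + 1) * (b + 1) - 1 = q + (q + 1) * b by ring_nf; omega,
    Nat.add_mul_mod_self_left, Nat.mod_eq_of_lt (by omega)]
  omega

theorem mul_succ_sub_one_succ_div (hp : 0 < p) (b : ℕ) : (p * (b + 1) - 1 + 1) / p = b + 1 := by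
  rw [Nat.sub_add_cancel (Nat.one_le_iff_ne_zero.mpr (by positivity)),
    Nat.mul_div_cancel_left _ hp]

theorem mul_succ_div_sub_one (hp : 0 < p) {a : ℕ} (h : a % p = p - 1) :
    p * ((a + 1) / p - 1 + 1) - 1 = a := by
  have hdvd : p ∣ a + 1 := by
    rw [Nat.dvd_iff_mod_eq_zero, Nat.add_mod, h]
    rcases Nat.lt_or_ge 1 p with h1 | h1
    · rw [Nat.mod_eq_of_lt h1, Nat.sub_add_cancel hp, Nat.mod_self]
    · obtain rfl : p = 1 := by omega
      simp
  have hpos : 0 < (a + 1) / p := Nat.div_pos (Nat.le_of_dvd (by omega) hdvd) hp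
  rw [Nat.sub_add_cancel hpos, Nat.mul_div_cancel' hdvd, Nat.add_sub_cancel]

end Nat

section TraceExponent

variable {σ : Type*} {p : ℕ}

/-- The unique exponent `u ≡ -𝟙 (mod p)` that `Tr` sends to `v`. -/
noncomputable def traceExponent [Finite σ] (p : ℕ) (v : σ →₀ ℕ) : σ →₀ ℕ :=
  Finsupp.equivFunOnFinite.symm fun j => p * (v j + 1) - 1

@[simp]
theorem traceExponent_apply [Finite σ] (v : σ →₀ ℕ) (j : σ) :
    traceExponent p v j = p * (v j + 1) - 1 := rfl

theorem eq_traceExponent_iff [Finite σ] (hp : 0 < p) (u v : σ →₀ ℕ)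
    (h0 : (fun a => (a + 1) / p - 1) 0 = 0) :
    u = traceExponent p v ↔
      (∀ j, u j % p = p - 1) ∧ u.mapRange (fun a => (a + 1) / p - 1) h0 = v := by
  constructor
  · rintro rfl
    refine ⟨fun j => Nat.mul_succ_sub_one_mod hp (v j), Finsupp.ext fun j => ?_⟩
    simp [Nat.mul_succ_sub_one_succ_div hp]
  · rintro ⟨hmod, rfl⟩
    ext j
    simp [Nat.mul_succ_div_sub_one hp (hmod j)]

theorem sum_mul_traceExponent [Fintype σ] (hp : 0 < p) (w : σ → ℕ) (v : σ →₀ ℕ) :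
    ∑ j, w j * traceExponent p v j = p * ∑ j, w j * v j + (p - 1) * ∑ j, w j := by
  have h : ∀ j, w j * traceExponent p v j = p * (w j * v j) + (p - 1) * w j := fun j => by
    obtain ⟨q, rfl⟩ : ∃ q, p = q + 1 := ⟨p - 1, by omega⟩
    rw [traceExponent_apply, show (q + 1) * (v j + 1) - 1 = (q + 1) * v j + q by ring_nf; omega,
      Nat.add_sub_cancel]
    ring
  simp only [h, Finset.sum_add_distrib, Finset.mul_sum]

theorem sum_mul_traceExponent_le_iff [Fintype σ] (hp : 0 < p) (w : σ → ℕ) (v v' : σ →₀ ℕ) :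
    ∑ j, w j * traceExponent p v j ≤ ∑ j, w j * traceExponent p v' j ↔
      ∑ j, w j * v j ≤ ∑ j, w j * v' j := by
  simp only [sum_mul_traceExponent hp, Nat.add_le_add_iff_right, Nat.mul_le_mul_left_iff hp]

theorem sum_mul_traceExponent_inj [Fintype σ] (hp : 0 < p) (w : σ → ℕ) (v v' : σ →₀ ℕ) :
    ∑ j, w j * traceExponent p v j = ∑ j, w j * traceExponent p v' j ↔
      ∑ j, w j * v j = ∑ j, w j * v' j := by
  simp only [sum_mul_traceExponent hp, Nat.add_right_cancel_iff, Nat.mul_left_cancel_iff hp]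

end TraceExponent

section

variable {n p : ℕ} [Fact p.Prime] {K : Type} [Field K] [CharP K p] [PerfectRing K p]

theorem coeff_Tr (g : MvPolynomial (Fin n) K) (v : Fin n →₀ ℕ) :
    coeff v (Tr n p K g) = (frobeniusEquiv K p).symm (coeff (traceExponent p v) g) := by
  have hp := (Fact.out : p.Prime).pos
  rw [Tr, coeff_sum]
  simp only [apply_ite (coeff v), coeff_monomial, coeff_zero, ← ite_and,
    ← eq_traceExponent_iff hp, Finset.sum_ite_eq']
  split_ifs with h
  · rfl
  · rw [notMem_support_iff.mp h, map_zero]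

theorem coeff_inw (w : Fin n → ℕ) (g : MvPolynomial (Fin n) K) (u : Fin n →₀ ℕ) :
    coeff u (inw n K w g) = if ∑ j, w j * u j = wdeg n K w g then coeff u g else 0 := by
  rw [inw, coeff_sum]
  simp only [apply_ite (coeff u), coeff_monomial, coeff_zero]
  rw [Finset.sum_eq_single u (fun _ _ hne => by simp [hne]) fun hu => by
    simp [notMem_support_iff.mp hu]]
  simp

theorem mem_support_Tr {g : MvPolynomial (Fin n) K} {v : Fin n →₀ ℕ} :
    v ∈ (Tr n p K g).support ↔ traceExponent p v ∈ g.support := by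
  simp only [mem_support_iff, coeff_Tr, ne_eq, EmbeddingLike.map_eq_zero_iff]

theorem wdeg_Tr {w : Fin n → ℕ} {g : MvPolynomial (Fin n) K} {v₀ : Fin n →₀ ℕ}
    (hmem : traceExponent p v₀ ∈ g.support)
    (hdeg : ∑ j, w j * traceExponent p v₀ j = wdeg n K w g) :
    wdeg n K w (Tr n p K g) = ∑ j, w j * v₀ j := by
  have hp := (Fact.out : p.Prime).pos
  refine le_antisymm (Finset.sup_le fun v hv => ?_)
    (Finset.le_sup (f := fun u => ∑ j, w j * u j) (mem_support_Tr.mpr hmem))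
  rw [← sum_mul_traceExponent_le_iff hp, hdeg]
  exact Finset.le_sup (f := fun u => ∑ j, w j * u j) (mem_support_Tr.mp hv)

end

theorem stmt4_general (n p : ℕ) [Fact p.Prime] (K : Type) [Field K] [CharP K p] [PerfectRing K p]
    (w : Fin n → ℕ) (g : MvPolynomial (Fin n) K) :
    Tr n p K (inw n K w g) = 0 ∨
      Tr n p K (inw n K w g) = inw n K w (Tr n p K g) := by
  by_cases h : ∃ v, traceExponent p v ∈ g.support ∧
      ∑ j, w j * traceExponent p v j = wdeg n K w g
  · obtain ⟨v₀, hmem, hdeg⟩ := h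
    right
    ext v
    rw [coeff_Tr, coeff_inw, coeff_inw, coeff_Tr, wdeg_Tr hmem hdeg, ← hdeg]
    simp only [sum_mul_traceExponent_inj (Fact.out : p.Prime).pos,
      apply_ite (frobeniusEquiv K p).symm, map_zero]
  · push Not at h
    left
    ext v
    rw [coeff_Tr, coeff_inw, coeff_zero]
    split_ifs with hdeg
    · rw [notMem_support_iff.mp fun hmem => h v hmem hdeg, map_zero]
    · exact map_zero _

/-- For a weight vector `w ∈ (ℕ_{>0})^n` and `g ∈ S = K[X_1,…,X_n]`
(`K` perfect of characteristic `p > 0`), either `Tr (in_w g) = 0` or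
`Tr (in_w g) = in_w (Tr g)`. -/
theorem stmt4 (n p : ℕ) [Fact p.Prime] (K : Type) [Field K] [CharP K p] [PerfectRing K p]
    (w : Fin n → ℕ) (hw : ∀ i, 0 < w i) (g : MvPolynomial (Fin n) K) :
    Tr n p K (inw n K w g) = 0 ∨
      Tr n p K (inw n K w g) = inw n K w (Tr n p K g) :=
  stmt4_general n p K w g
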